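/- arXiv:2402.15765 — 3 statements merged into one kernel-verified Lean document; each statement's English description precedes it below -/
import Mathlib

section
/- Let a_1, ..., a_{N-1} > 0 be fixed. Define for s ∈ (0, π] the complex number m(s) = (1/s)·e^{i s x_0}·[ Σ_{k=1}^{N-2} (a_k + a_{k+1}) e^{i s Σ_{j=1}^k a_j} − (Σ_{k=1}^{N-2} a_k) e^{i s Σ_{j=1}^{N-1} a_j} − Σ_{k=2}^{N-1} a_k ]. Then the set { s ∈ (0, π] : m(s) = 0 } is finite. -/
/-!
Up to the nonvanishing factor `s⁻¹ e^{i s x₀}`, `m(s)` is the exponential sum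
`∑_{k=0}^{N-1} c_k e^{i s θ_k}` with frequencies `θ_k = a_1 + ⋯ + a_k` (so `θ_0 = 0`), which
are strictly increasing because the `a_k` are positive. Its top coefficient
`c_{N-1} = -(a_1 + ⋯ + a_{N-2})` is nonzero, so by Dedekind's independence of the characters
`s ↦ e^{i s θ}` the sum is not identically zero. Being real analytic, it then has only finitely
many zeros in the compact interval `[0, π]`.
-/

open Finset Complex

noncomputable def expIMulChar (t : ℝ) : Multiplicative ℝ →* ℂ where
  toFun s := cexp (I * s.toAdd * t)
  map_one' := by simp
  map_mul' x y := by simp only [toAdd_mul, ofReal_add, mul_add, add_mul, exp_add]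

lemma expIMulChar_injective : Function.Injective expIMulChar := by
  intro t t' h
  by_contra hne
  have hd : (t : ℂ) - t' ≠ 0 := by exact_mod_cast sub_ne_zero.mpr hne
  -- at `r = π / (t - t')` the two characters differ by the factor `e^{iπ} = -1`
  set r : ℝ := Real.pi / (t - t')
  have key : cexp (I * r * t) = cexp (I * r * t') := DFunLike.congr_fun h (.ofAdd r)
  have hr : I * r * t - I * r * t' = Real.pi * I := by
    simp only [r]; push_cast; field_simp
  have := exp_sub (I * r * t) (I * r * t')
  rw [hr, exp_pi_mul_I, key, div_self (exp_ne_zero _)] at this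
  norm_num at this

theorem linearIndependent_cexp_I_mul :
    LinearIndependent ℂ (fun (t s : ℝ) => cexp (I * s * t)) :=
  (linearIndependent_monoidHom (Multiplicative ℝ) ℂ).comp expIMulChar expIMulChar_injective

theorem eq_zero_of_sum_cexp_I_mul_eq_zero {ι : Type*} {S : Finset ι} {θ : ι → ℝ}
    (hθ : Set.InjOn θ S) {c : ι → ℂ} (h : ∀ s : ℝ, ∑ k ∈ S, c k * cexp (I * s * θ k) = 0) :
    ∀ k ∈ S, c k = 0 := by
  have hli : LinearIndepOn ℂ ((fun (t s : ℝ) => cexp (I * s * t)) ∘ θ) S :=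
    (linearIndependent_cexp_I_mul.linearIndepOn _).comp_of_image hθ
  refine linearIndepOn_finset_iff.mp hli c (funext fun s => ?_)
  simpa using h s

theorem analyticOnNhd_sum_cexp_I_mul {ι : Type*} (S : Finset ι) (c : ι → ℂ) (θ : ι → ℝ) :
    AnalyticOnNhd ℝ (fun s : ℝ => ∑ k ∈ S, c k * cexp (I * s * θ k)) Set.univ := by
  refine Finset.analyticOnNhd_fun_sum _ fun k _ => analyticOnNhd_const.mul ?_
  exact analyticOnNhd_cexp.restrictScalars.comp
    ((analyticOnNhd_const.mul (ofRealCLM.analyticOnNhd _)).mul analyticOnNhd_const)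
    (Set.mapsTo_univ _ _)

theorem AnalyticOnNhd.finite_zeros_of_isCompact {𝕜 E : Type*} [NontriviallyNormedField 𝕜]
    [NormedAddCommGroup E] [NormedSpace 𝕜 E] {f : 𝕜 → E} {U K : Set 𝕜}
    (hf : AnalyticOnNhd 𝕜 f U) (hU : IsPreconnected U) (hKU : K ⊆ U) (hK : IsCompact K)
    (hf0 : ¬ Set.EqOn f 0 U) : {x ∈ K | f x = 0}.Finite := by
  have hne := (hf.eqOn_zero_or_eventually_ne_zero_of_preconnected hU).resolve_left hf0
  convert hK.finite_sdiff_of_mem_codiscreteWithin (Filter.codiscreteWithin_mono hKU hne) using 1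
  ext x
  simp

theorem strictMonoOn_sum_Icc_one {M : Type*} [AddCommMonoid M] [PartialOrder M]
    [IsOrderedCancelAddMonoid M] {a : ℕ → M} {n : ℕ} (ha : ∀ k ∈ Icc 1 n, 0 < a k) :
    StrictMonoOn (fun k => ∑ j ∈ Icc 1 k, a j) (Set.Iic n) := by
  intro k _ k' hk' hkk'
  rw [Set.mem_Iic] at hk'
  exact sum_lt_sum_of_subset (Icc_subset_Icc_right hkk'.le) (i := k + 1)
    (mem_Icc.mpr ⟨by omega, by omega⟩) (by simp)
    (ha _ (mem_Icc.mpr ⟨by omega, by omega⟩))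
    (fun j hj _ => (ha j (mem_Icc.mpr ⟨(mem_Icc.mp hj).1, (mem_Icc.mp hj).2.trans hk'⟩)).le)

-- index `0` carries the constant term, whose frequency is the empty partial sum `0`
noncomputable def meanDisplacementCoeff (N : ℕ) (a : ℕ → ℝ) (k : ℕ) : ℝ :=
  if k = 0 then -∑ j ∈ Icc 2 (N - 1), a j
  else if k = N - 1 then -∑ j ∈ Icc 1 (N - 2), a j
  else a k + a (k + 1)

theorem sum_meanDisplacementCoeff_mul_cexp {N : ℕ} (hN : 2 ≤ N) (a : ℕ → ℝ) (s : ℝ) :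
    ∑ k ∈ Icc 0 (N - 1), (meanDisplacementCoeff N a k : ℂ) *
        cexp (I * s * (∑ j ∈ Icc 1 k, a j : ℝ)) =
      (∑ k ∈ Icc 1 (N - 2), ((a k : ℂ) + (a (k + 1) : ℂ)) *
          cexp (I * s * (∑ j ∈ Icc 1 k, a j : ℝ)))
        - (∑ k ∈ Icc 1 (N - 2), (a k : ℂ)) * cexp (I * s * (∑ j ∈ Icc 1 (N - 1), a j : ℝ))
        - (∑ k ∈ Icc 2 (N - 1), (a k : ℂ)) := by
  have hsplit : Icc 0 (N - 1) = insert 0 (insert (N - 1) (Icc 1 (N - 2))) := by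
    ext k; simp only [mem_Icc, mem_insert]; omega
  have hmid : ∀ k ∈ Icc 1 (N - 2), (meanDisplacementCoeff N a k : ℂ) = a k + a (k + 1) := by
    intro k hk
    rw [mem_Icc] at hk
    rw [meanDisplacementCoeff, if_neg (by omega), if_neg (by omega)]
    push_cast; rfl
  rw [hsplit, sum_insert (by simp only [mem_insert, mem_Icc]; omega),
    sum_insert (by simp only [mem_Icc]; omega),
    sum_congr rfl fun k hk => congrArg (· * _) (hmid k hk)]
  simp only [meanDisplacementCoeff, if_pos, if_neg (show N - 1 ≠ 0 by omega)]
  push_cast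
  simp only [zero_lt_one, Icc_eq_empty_of_lt, sum_empty, mul_zero, exp_zero]
  ring

theorem meanDisplacementCoeff_sub_one_lt_zero {N : ℕ} (hN : 3 ≤ N) {a : ℕ → ℝ}
    (ha : ∀ k ∈ Icc 1 (N - 1), 0 < a k) : meanDisplacementCoeff N a (N - 1) < 0 := by
  rw [meanDisplacementCoeff, if_neg (by omega), if_pos rfl, neg_lt_zero]
  exact sum_pos (fun j hj => ha j (Icc_subset_Icc_right (by omega) hj))
    ⟨1, mem_Icc.mpr ⟨le_rfl, by omega⟩⟩

/-- The mean displacement `m(s)` of the generalized tiling billiard vanishes for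
at most finitely many values of the inverse circumradius `s ∈ (0, π]`. -/
theorem stmt_2 (N : ℕ) (hN : 5 ≤ N) (a : ℕ → ℝ)
    (ha : ∀ k ∈ Finset.Icc 1 (N - 1), 0 < a k) (x₀ : ℝ)
    (m : ℝ → ℂ)
    (hm : ∀ s : ℝ, m s = (1 / (s : ℂ)) * Complex.exp (Complex.I * s * x₀) *
      ((∑ k ∈ Finset.Icc 1 (N - 2), ((a k : ℂ) + (a (k + 1) : ℂ)) *
          Complex.exp (Complex.I * s * (∑ j ∈ Finset.Icc 1 k, a j : ℝ)))
        - (∑ k ∈ Finset.Icc 1 (N - 2), (a k : ℂ)) *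
            Complex.exp (Complex.I * s * (∑ j ∈ Finset.Icc 1 (N - 1), a j : ℝ))
        - (∑ k ∈ Finset.Icc 2 (N - 1), (a k : ℂ)))) :
    {s ∈ Set.Ioc (0 : ℝ) Real.pi | m s = 0}.Finite := by
  set θ : ℕ → ℝ := fun k => ∑ j ∈ Icc 1 k, a j
  set f : ℝ → ℂ := fun s =>
    ∑ k ∈ Icc 0 (N - 1), (meanDisplacementCoeff N a k : ℂ) * cexp (I * s * θ k)
  have hzeros : {s ∈ Set.Ioc 0 Real.pi | m s = 0} ⊆ {s ∈ Set.Icc 0 Real.pi | f s = 0} := by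
    rintro s ⟨hs, hms⟩
    have hfs := hm s
    rw [hms, ← sum_meanDisplacementCoeff_mul_cexp (by omega)] at hfs
    exact ⟨Set.Ioc_subset_Icc_self hs,
      (mul_eq_zero.mp hfs.symm).resolve_left (by simp [hs.1.ne', exp_ne_zero])⟩
  have hθ : Set.InjOn θ (Icc 0 (N - 1)) :=
    (strictMonoOn_sum_Icc_one ha).injOn.mono fun k hk => (mem_Icc.mp hk).2
  have hf : ¬ Set.EqOn f 0 Set.univ := fun hf0 =>
    (meanDisplacementCoeff_sub_one_lt_zero (by omega) ha).ne <| by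
      exact_mod_cast eq_zero_of_sum_cexp_I_mul_eq_zero hθ (fun s => hf0 (Set.mem_univ s))
        (N - 1) (by simp)
  exact ((analyticOnNhd_sum_cexp_I_mul _ _ θ).finite_zeros_of_isCompact isPreconnected_univ
    (Set.subset_univ _) isCompact_Icc hf).subset hzeros
end

section
/- Let a_1, a_2, a_3, a_4 > 0 and let Q be the 10×4 real matrix whose transpose has columns indexed 1..10 given by: column 1 = (a_2+a_3+a_4, −a_1+a_3+a_4, −(a_1+a_2), −(a_1+a_2)), column 2 = (a_2+a_3, −a_1+a_3, −(a_1+a_2), 0), column 3 = (0, a_3+a_4, −a_2+a_4, −(a_2+a_3)), column 4 = (a_3+a_4, a_3+a_4, −(a_1+a_2)+a_4, −(a_1+a_2+a_3)), column 5 = (0, a_4, a_4, −(a_2+a_3)), column 6 = (a_3+a_4, a_3+a_4, −(a_1+a_2), −(a_1+a_2)), column 7 = (a_2+a_3, −a_1, −a_1, 0), column 8 = (0, −(a_3+a_4), a_2, a_2), column 9 = (−a_3, −a_3, a_1+a_2, 0), column 10 = (−(a_2+a_3+a_4), a_1−a_4, a_1−a_4, a_1+a_2+a_3). Then Σ_{i=1}^{4}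 a_i R_i(Q) = 0, where R_i(Q) denotes the i-th column of the transpose of Q; consequently Q has rank exactly 3. -/
namespace Matrix

/-- In `Matrix.of !![…]` the argument of `of` is already a matrix, which keeps `simp` from
evaluating entries. -/
theorem of_matrix {m n α : Type*} (M : Matrix m n α) : of (M : m → n → α) = M :=
  rfl

variable {K m n k : Type*} [Field K] [Fintype n]

theorem rank_lt_card_height_of_vecMul_eq_zero [Fintype m] {A : Matrix m n K} {v : m → K}
    (hv : v ≠ 0) (h : v ᵥ* A = 0) : A.rank < Fintype.card m := by
  refine (rank_le_card_height A).lt_of_ne fun hA => hv ?_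
  have hrows : LinearIndependent K A.row := by
    rw [linearIndependent_iff_card_eq_finrank_span, Set.finrank, ← rank_eq_finrank_span_row, hA]
  exact funext (Fintype.linearIndependent_iff.mp hrows v ((vecMul_eq_sum v A).symm.trans h))

theorem card_le_rank_of_det_submatrix_ne_zero [Fintype k] [DecidableEq k] (A : Matrix m n K)
    (r : k → m) (c : k → n) (h : (A.submatrix r c).det ≠ 0) : Fintype.card k ≤ A.rank :=
  (rank_of_isUnit _ ((isUnit_iff_isUnit_det _).mpr h.isUnit)).ge.trans (rank_submatrix_le A r c)

end Matrix

theorem stmt_5_general (a₁ a₂ a₃ a₄ : ℝ) (h₂ : 0 < a₂) (h₃ : 0 < a₃) (h₄ : 0 < a₄)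
    (Qt : Matrix (Fin 4) (Fin 10) ℝ)
    (hQt : Qt = Matrix.of
      !![a₂+a₃+a₄, a₂+a₃, 0, a₃+a₄, 0, a₃+a₄, a₂+a₃, 0, -a₃, -(a₂+a₃+a₄);
         -a₁+a₃+a₄, -a₁+a₃, a₃+a₄, a₃+a₄, a₄, a₃+a₄, -a₁, -(a₃+a₄), -a₃, a₁-a₄;
         -(a₁+a₂), -(a₁+a₂), -a₂+a₄, -(a₁+a₂)+a₄, a₄, -(a₁+a₂), -a₁, a₂, a₁+a₂, a₁-a₄;
         -(a₁+a₂), 0, -(a₂+a₃), -(a₁+a₂+a₃), -(a₂+a₃), -(a₁+a₂), 0, a₂, 0, a₁+a₂+a₃]) :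
    (∀ j : Fin 10, ∑ i : Fin 4, ![a₁, a₂, a₃, a₄] i * Qt i j = 0) ∧ Qt.rank = 3 := by
  have hrel : ∀ j : Fin 10, ∑ i : Fin 4, ![a₁, a₂, a₃, a₄] i * Qt i j = 0 := by
    intro j
    fin_cases j <;> simp [hQt, Matrix.of_matrix, Fin.sum_univ_four] <;> ring
  have hminor : (Qt.submatrix ![0, 1, 2] ![3, 4, 7]).det = (a₃ + a₄) * a₄ * (a₂ + a₃ + a₄) := by
    rw [Matrix.det_fin_three]
    simp [hQt, Matrix.of_matrix]
    ring
  refine ⟨hrel, le_antisymm ?_ ?_⟩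
  · have hv : ![a₁, a₂, a₃, a₄] ≠ 0 := fun h => h₄.ne' (congrFun h 3)
    have hlt : Qt.rank < 4 := by
      simpa using Matrix.rank_lt_card_height_of_vecMul_eq_zero hv (funext hrel)
    omega
  · simpa using Qt.card_le_rank_of_det_submatrix_ne_zero ![0, 1, 2] ![3, 4, 7]
      (hminor ▸ by positivity)

/-- The 10×4 coefficient matrix `Q` of the pentagonal deviation vector satisfies the
linear relation `Σ aᵢ Rᵢ(Q) = 0` among its columns (the rows of `ᵗQ`), and has rank
exactly 3. Here `Qt = ᵗQ` is given explicitly as a 4×10 matrix. -/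
theorem stmt_5 (a₁ a₂ a₃ a₄ : ℝ) (h₁ : 0 < a₁) (h₂ : 0 < a₂) (h₃ : 0 < a₃) (h₄ : 0 < a₄)
    (Qt : Matrix (Fin 4) (Fin 10) ℝ)
    (hQt : Qt = Matrix.of
      !![a₂+a₃+a₄, a₂+a₃, 0, a₃+a₄, 0, a₃+a₄, a₂+a₃, 0, -a₃, -(a₂+a₃+a₄);
         -a₁+a₃+a₄, -a₁+a₃, a₃+a₄, a₃+a₄, a₄, a₃+a₄, -a₁, -(a₃+a₄), -a₃, a₁-a₄;
         -(a₁+a₂), -(a₁+a₂), -a₂+a₄, -(a₁+a₂)+a₄, a₄, -(a₁+a₂), -a₁, a₂, a₁+a₂, a₁-a₄;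
         -(a₁+a₂), 0, -(a₂+a₃), -(a₁+a₂+a₃), -(a₂+a₃), -(a₁+a₂), 0, a₂, 0, a₁+a₂+a₃]) :
    (∀ j : Fin 10, ∑ i : Fin 4, ![a₁, a₂, a₃, a₄] i * Qt i j = 0) ∧ Qt.rank = 3 :=
  stmt_5_general a₁ a₂ a₃ a₄ h₂ h₃ h₄ Qt hQt
end

section
/- Let N ≥ 5 be odd and a_1, ..., a_{N-1} > 0. Then (a_{N-2}+a_{N-1})·[ (−1)^{N-3} ∏_{k=1}^{N-3}(a_k+a_{k+1}) + Σ_{l=3, l odd}^{N-3} (a_l+a_{l+1})·(−1)^{N-2-l}·∏_{k=2}^{N-3}(a_k+a_{k+1}) ] + (−Σ_{k=1}^{N-3} a_k + a_{N-1})·∏_{k=2}^{N-2}(a_k+a_{k+1}) = a_{N-1}·∏_{k=2}^{N-2}(a_k+a_{k+1}), which is strictly positive. -/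
open Finset

lemma key_sum (a : ℕ → ℝ) (m : ℕ) :
    (a 1 + a 2) + ∑ l ∈ (Finset.Icc 3 (2*m+2)).filter (fun l => Odd l), (a l + a (l+1))
      = ∑ k ∈ Finset.Icc 1 (2*m+2), a k := by
  induction m with
  | zero =>
    rw [show Finset.Icc 3 (2*0+2) = ∅ by rfl, show Finset.Icc 1 (2*0+2) = {1,2} by rfl]
    simp
  | succ n ih =>
    have h1 : (Finset.Icc 3 (2*(n+1)+2)).filter (fun l => Odd l)
        = insert (2*n+3) ((Finset.Icc 3 (2*n+2)).filter (fun l => Odd l)) := by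
      ext x
      simp only [Finset.mem_filter, Finset.mem_Icc, Finset.mem_insert, Nat.odd_iff]
      omega
    rw [h1, Finset.sum_insert (by simp only [Finset.mem_filter, Finset.mem_Icc]; omega)]
    have h2 : ∑ k ∈ Finset.Icc 1 (2*(n+1)+2), a k
        = (∑ k ∈ Finset.Icc 1 (2*n+2), a k) + a (2*n+3) + a (2*n+4) := by
      rw [show 2*(n+1)+2 = (2*n+3)+1 by ring, Finset.sum_Icc_succ_top (by omega),
        Finset.sum_Icc_succ_top (by omega)]
    rw [h2]
    have : (2*n+3)+1 = 2*n+4 := by ring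
    rw [this]
    linarith

/-- The determinant identity proving that the coefficient matrix `Q` has rank
exactly `N-2` when the number of sides `N` is odd. -/
theorem stmt_6 (N : ℕ) (hN : 5 ≤ N) (hodd : Odd N) (a : ℕ → ℝ)
    (ha : ∀ k ∈ Finset.Icc 1 (N - 1), 0 < a k) :
    (a (N-2) + a (N-1)) *
        ((-1 : ℝ) ^ (N - 3) * ∏ k ∈ Finset.Icc 1 (N-3), (a k + a (k+1))
          + ∑ l ∈ (Finset.Icc 3 (N-3)).filter (fun l => Odd l),
              (a l + a (l+1)) * (-1 : ℝ) ^ (N - 2 - l) *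
                ∏ k ∈ Finset.Icc 2 (N-3), (a k + a (k+1)))
      + (-(∑ k ∈ Finset.Icc 1 (N-3), a k) + a (N-1)) *
          ∏ k ∈ Finset.Icc 2 (N-2), (a k + a (k+1))
    = a (N-1) * ∏ k ∈ Finset.Icc 2 (N-2), (a k + a (k+1)) ∧
    0 < a (N-1) * ∏ k ∈ Finset.Icc 2 (N-2), (a k + a (k+1)) := by
  obtain ⟨m, hm⟩ : ∃ m, N = 2*m+5 := by
    obtain ⟨j, hj⟩ := hodd
    exact ⟨j - 2, by omega⟩
  subst hm
  rw [show 2*m+5-3 = 2*m+2 by omega, show 2*m+5-2 = 2*m+3 by omega,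
    show 2*m+5-1 = 2*m+4 by omega] at *
  have hpos : 0 < a (2*m+4) * ∏ k ∈ Finset.Icc 2 (2*m+3), (a k + a (k+1)) := by
    apply mul_pos (ha _ (by simp only [Finset.mem_Icc]; omega))
    apply Finset.prod_pos
    intro k hk
    simp only [Finset.mem_Icc] at hk
    have h1 := ha k (by simp only [Finset.mem_Icc]; omega)
    have h2 := ha (k+1) (by simp only [Finset.mem_Icc]; omega)
    linarith
  refine ⟨?_, hpos⟩
  -- sign simplifications
  have hsign1 : ((-1 : ℝ)) ^ (2*m+2) = 1 := Even.neg_one_pow ⟨m+1, by ring⟩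
  have hsum : ∑ l ∈ (Finset.Icc 3 (2*m+2)).filter (fun l => Odd l),
      (a l + a (l+1)) * (-1 : ℝ) ^ (2*m+3 - l) * ∏ k ∈ Finset.Icc 2 (2*m+2), (a k + a (k+1))
      = (∑ l ∈ (Finset.Icc 3 (2*m+2)).filter (fun l => Odd l), (a l + a (l+1)))
          * ∏ k ∈ Finset.Icc 2 (2*m+2), (a k + a (k+1)) := by
    rw [Finset.sum_mul]
    apply Finset.sum_congr rfl
    intro l hl
    simp only [Finset.mem_filter, Finset.mem_Icc, Nat.odd_iff] at hl
    have : ((-1 : ℝ)) ^ (2*m+3 - l) = 1 :=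
      Even.neg_one_pow ⟨(2*m+3-l)/2, by omega⟩
    rw [this, mul_one]
  have hprod1 : ∏ k ∈ Finset.Icc 1 (2*m+2), (a k + a (k+1))
      = (a 1 + a 2) * ∏ k ∈ Finset.Icc 2 (2*m+2), (a k + a (k+1)) := by
    rw [show Finset.Icc 1 (2*m+2) = insert 1 (Finset.Icc 2 (2*m+2)) by
      ext x; simp only [Finset.mem_insert, Finset.mem_Icc]; omega]
    rw [Finset.prod_insert (by simp only [Finset.mem_Icc]; omega)]
  have hprod2 : ∏ k ∈ Finset.Icc 2 (2*m+3), (a k + a (k+1))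
      = (∏ k ∈ Finset.Icc 2 (2*m+2), (a k + a (k+1))) * (a (2*m+3) + a (2*m+4)) := by
    rw [show 2*m+3 = (2*m+2)+1 by ring, Finset.prod_Icc_succ_top (by omega)]
  have hkey := key_sum a m
  rw [hsign1, hsum, hprod1, hprod2]
  linear_combination ((a (2*m+3) + a (2*m+4)) * ∏ k ∈ Finset.Icc 2 (2*m+2), (a k + a (k+1))) * hkey
end
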